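/- arXiv:2405.07511 — 5 statements merged into one kernel-verified Lean document; each statement's English description precedes it below -/
import Mathlib

section
/- Let ω₀²(θ) = −η sin²θ (cos θ(1−β²) + α Z(θ)) / [cos θ · Z(θ) · (η(Z(θ)+α cos θ)² + cos²θ + ν sin²θ)] with Z(θ) = √(β² sin²θ + cos²θ), parameters η, ν > 0, α ∈ [0,1], β > 0. If β² > 1 + α, then there exists θ ∈ (0, π/2) with ω₀²(θ) > 0. -/
open Real

/-- If the ellipsoid of revolution is sufficiently oblate, β² > 1 + α, then
there exists a nutation angle θ ∈ (0, π/2) with ω₀²(θ) > 0, i.e. a permanent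
rotation with the center of mass above the geometric center exists. -/
theorem exists_permanent_rotation_above (α β η ν : ℝ)
    (hα : α ∈ Set.Icc (0:ℝ) 1) (hβ : 0 < β) (hη : 0 < η) (hν : 0 < ν)
    (hob : 1 + α < β ^ 2)
    (Z ω₀sq : ℝ → ℝ)
    (hZ : ∀ θ : ℝ, Z θ = Real.sqrt (β ^ 2 * Real.sin θ ^ 2 + Real.cos θ ^ 2))
    (hω : ∀ θ : ℝ, ω₀sq θ =
      -η * Real.sin θ ^ 2 * (Real.cos θ * (1 - β ^ 2) + α * Z θ) /
        (Real.cos θ * Z θ *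
          (η * (Z θ + α * Real.cos θ) ^ 2 + Real.cos θ ^ 2 + ν * Real.sin θ ^ 2))) :
    ∃ θ ∈ Set.Ioo 0 (π / 2), 0 < ω₀sq θ := by
  obtain ⟨hα0, hα1⟩ := hα
  set A : ℝ := β ^ 2 - 1 with hAdef
  have hAα : α < A := by simp only [hAdef]; linarith
  have hA0 : 0 < A := lt_of_le_of_lt hα0 hAα
  set D : ℝ := α ^ 2 * β ^ 2 + 1 with hDdef
  have hD0 : 0 < D := by positivity
  have hnum0 : 0 < A ^ 2 - α ^ 2 := by nlinarith
  set c : ℝ := Real.sqrt ((A ^ 2 - α ^ 2) / D) with hcdef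
  have hc0 : 0 < c := Real.sqrt_pos.2 (div_pos hnum0 hD0)
  have hc2 : c ^ 2 = (A ^ 2 - α ^ 2) / D := by
    rw [hcdef, Real.sq_sqrt (le_of_lt (div_pos hnum0 hD0))]
  refine ⟨Real.arctan c, ⟨(by simpa using Real.arctan_strictMono hc0 : (0:ℝ) < Real.arctan c), Real.arctan_lt_pi_div_two c⟩, ?_⟩
  set θ : ℝ := Real.arctan c with hθdef
  have hθ0 : 0 < θ := (by simpa using Real.arctan_strictMono hc0 : (0:ℝ) < Real.arctan c)
  have hθπ : θ < π / 2 := Real.arctan_lt_pi_div_two c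
  have hcos : 0 < Real.cos θ := Real.cos_pos_of_mem_Ioo
    ⟨by linarith [Real.pi_pos], hθπ⟩
  have hsin : 0 < Real.sin θ := Real.sin_pos_of_pos_of_lt_pi hθ0
    (by linarith [Real.pi_pos])
  have htan : Real.sin θ = c * Real.cos θ := by
    have := Real.tan_arctan c
    rw [Real.tan_eq_sin_div_cos] at this
    field_simp at this
    linarith [this]
  have hZpos : 0 < Z θ := by
    rw [hZ θ]
    apply Real.sqrt_pos.2
    nlinarith [pow_pos hcos 2, sq_nonneg (Real.sin θ)]
  have hZsq : (Z θ) ^ 2 = β ^ 2 * Real.sin θ ^ 2 + Real.cos θ ^ 2 := by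
    rw [hZ θ]
    apply Real.sq_sqrt
    nlinarith [pow_pos hcos 2, sq_nonneg (Real.sin θ)]
  -- key inequality : α * Z θ < cos θ * A
  have hkey : α * Z θ < Real.cos θ * A := by
    have hsq : (α * Z θ) ^ 2 < (Real.cos θ * A) ^ 2 := by
      have hs2 : Real.sin θ ^ 2 = c ^ 2 * Real.cos θ ^ 2 := by
        rw [htan]; ring
      have hc2' : c ^ 2 * D = A ^ 2 - α ^ 2 := by
        rw [hc2]; field_simp
      have hco2 : 0 < Real.cos θ ^ 2 := pow_pos hcos 2
      rw [mul_pow, mul_pow, hZsq, hs2]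
      -- α ^ 2 * (β ^ 2 * (c ^ 2 * cos ^ 2) + cos ^ 2) < cos ^ 2 * A ^ 2
      have hmain : α ^ 2 * (β ^ 2 * c ^ 2 + 1) < A ^ 2 := by
        nlinarith [sq_nonneg c, sq_nonneg α]
      nlinarith [hmain, hco2]
    have hposR : 0 < Real.cos θ * A := mul_pos hcos hA0
    have hnn : 0 ≤ α * Z θ := mul_nonneg hα0 hZpos.le
    exact lt_of_pow_lt_pow_left₀ 2 hposR.le hsq
  rw [hω θ]
  apply div_pos
  · have hX : Real.cos θ * (1 - β ^ 2) + α * Z θ < 0 := by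
      have : Real.cos θ * (1 - β ^ 2) = -(Real.cos θ * A) := by
        rw [hAdef]; ring
      linarith [hkey, this.ge, this.le]
    have h := mul_pos (mul_pos hη (pow_pos hsin 2)) (neg_pos.2 hX)
    have heq : -η * Real.sin θ ^ 2 * (Real.cos θ * (1 - β ^ 2) + α * Z θ)
        = η * Real.sin θ ^ 2 * -(Real.cos θ * (1 - β ^ 2) + α * Z θ) := by ring
    rw [heq]; exact h
  · apply mul_pos (mul_pos hcos hZpos)
    have h1 : 0 ≤ η * (Z θ + α * Real.cos θ) ^ 2 :=
      mul_nonneg hη.le (sq_nonneg _)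
    have h2 : 0 < Real.cos θ ^ 2 := pow_pos hcos 2
    have h3 : 0 < ν * Real.sin θ ^ 2 := mul_pos hν (pow_pos hsin 2)
    linarith
end

section
/- With ω₀²(θ) as above and β² < 1 + α, α ≥ 0, for every θ ∈ (0, π/2) one has ω₀²(θ) ≤ 0; i.e., no permanent rotations with the center of mass above the geometric center exist for β² < 1 + α. -/
open Real

/-- If β² < 1 + α, then for every θ ∈ (0, π/2) one has ω₀²(θ) ≤ 0: no
permanent rotations with the center of mass above the geometric center. -/
theorem no_permanent_rotation_above (α β η ν : ℝ)
    (hα0 : 0 ≤ α) (hα1 : α ≤ 1) (hβ : 0 < β) (hη : 0 < η) (hν : 0 < ν)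
    (hob : β ^ 2 < 1 + α)
    (Z ω₀sq : ℝ → ℝ)
    (hZ : ∀ θ : ℝ, Z θ = Real.sqrt (β ^ 2 * Real.sin θ ^ 2 + Real.cos θ ^ 2))
    (hω : ∀ θ : ℝ, ω₀sq θ =
      -η * Real.sin θ ^ 2 * (Real.cos θ * (1 - β ^ 2) + α * Z θ) /
        (Real.cos θ * Z θ *
          (η * (Z θ + α * Real.cos θ) ^ 2 + Real.cos θ ^ 2 + ν * Real.sin θ ^ 2))) :
    ∀ θ ∈ Set.Ioo 0 (π / 2), ω₀sq θ ≤ 0 := by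
  rintro θ ⟨h0, h1⟩
  have hs : 0 < Real.sin θ := Real.sin_pos_of_pos_of_lt_pi h0 (lt_trans h1 (by linarith [Real.pi_pos]))
  have hc : 0 < Real.cos θ := Real.cos_pos_of_mem_Ioo ⟨by linarith [Real.pi_pos], h1⟩
  have hZc : Real.cos θ ≤ Z θ := by
    rw [hZ]
    have : Real.cos θ = Real.sqrt (Real.cos θ ^ 2) := (Real.sqrt_sq hc.le).symm
    rw [this]
    exact Real.sqrt_le_sqrt (by nlinarith [sq_nonneg (Real.sin θ)])
  have hZ0 : 0 < Z θ := lt_of_lt_of_le hc hZc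
  have hnum : 0 ≤ Real.cos θ * (1 - β ^ 2) + α * Z θ := by nlinarith
  have hden : 0 < Real.cos θ * Z θ *
      (η * (Z θ + α * Real.cos θ) ^ 2 + Real.cos θ ^ 2 + ν * Real.sin θ ^ 2) := by
    have h2 : 0 < η * (Z θ + α * Real.cos θ) ^ 2 + Real.cos θ ^ 2 + ν * Real.sin θ ^ 2 := by
      nlinarith [sq_nonneg (Z θ + α * Real.cos θ)]
    positivity
  rw [hω]
  apply div_nonpos_of_nonpos_of_nonneg _ hden.le
  have := mul_nonneg (mul_pos hη (pow_pos hs 2)).le hnum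
  nlinarith [this]
end

section
/- If β² > 1 − α with α ∈ [0,1], β > 0, then −(cos θ(1−β²) + α Z(θ))/cos θ ≥ 0 for all θ ∈ (π/2, π), where Z(θ) = √(β² sin²θ + cos²θ); that is, ω₀²(θ) ≥ 0 on (π/2, π). -/
open Real

/-- If β² > 1 − α (α ∈ [0,1], β > 0), then for every θ ∈ (π/2, π) the sign
factor of ω₀² is nonnegative: `−(cos θ(1−β²) + α Z(θ))/cos θ ≥ 0`, where
`Z(θ) = √(β² sin²θ + cos²θ)`. Hence permanent rotations with the center of
mass below the geometric center are admissible for every θ ∈ (π/2, π). -/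
theorem permanent_rotation_below_admissible (α β : ℝ)
    (hα0 : 0 ≤ α) (hα1 : α ≤ 1) (hβ : 0 < β) (hob : 1 - α < β ^ 2) :
    ∀ θ ∈ Set.Ioo (π / 2) π,
      0 ≤ -(Real.cos θ * (1 - β ^ 2) +
            α * Real.sqrt (β ^ 2 * Real.sin θ ^ 2 + Real.cos θ ^ 2)) /
          Real.cos θ := by
  intro θ ⟨h1, h2⟩
  have hc : Real.cos θ < 0 := by
    apply Real.cos_neg_of_pi_div_two_lt_of_lt h1
    linarith [Real.pi_pos]
  set Z := Real.sqrt (β ^ 2 * Real.sin θ ^ 2 + Real.cos θ ^ 2) with hZdef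
  have hZc : -Real.cos θ ≤ Z := by
    have h1 : Real.sqrt (Real.cos θ ^ 2) ≤ Z := by
      apply Real.sqrt_le_sqrt
      nlinarith [sq_nonneg (Real.sin θ)]
    rw [Real.sqrt_sq_eq_abs] at h1
    have := neg_abs_le (Real.cos θ)
    linarith [abs_nonneg (Real.cos θ)]
  have hX : 0 ≤ Real.cos θ * (1 - β ^ 2) + α * Z := by
    nlinarith [hZc, hc, hob, hα0]
  have : -(Real.cos θ * (1 - β ^ 2) + α * Z) ≤ 0 := by linarith
  exact div_nonneg_of_nonpos this hc.le
end

section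
/- For α = 0, the fixed point θ = π/2 of the reduced system for the rolling ellipsoid of revolution is linearly stable if and only if |κ| < κ_c = √((β²−1)/β) (for β > 1; for β ≤ 1 it is stable for all κ). Equivalently: the sign condition G₀′(π/2) < 0 holds iff κ² < (β²−1)/β, where G₀(θ) = κ² cos θ/sin³θ − U′(θ), U(θ) = Z(θ) = √(β² sin²θ + cos²θ). -/
/-!
On the equator `cos θ` vanishes, and both terms of `G₀` carry a factor `cos θ`:
`G₀ θ = cos θ * (κ² / sin³ θ - (β² - 1) sin θ / Z θ)`.
Differentiating a product whose first factor vanishes only sees the first factor's derivative,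
so `G₀′(π/2) = -sin(π/2) * (κ² - (β² - 1)/Z(π/2))`, and `Z(π/2) = β`.
-/

open Real Filter Topology

theorem HasDerivAt.smul_of_eq_zero {𝕜 F : Type*} [NontriviallyNormedField 𝕜]
    [NormedAddCommGroup F] [NormedSpace 𝕜 F] {f : 𝕜 → 𝕜} {k : 𝕜 → F} {f' x : 𝕜}
    (hf : HasDerivAt f f' x) (hfx : f x = 0) (hk : ContinuousAt k x) :
    HasDerivAt (fun y => f y • k y) (f' • k x) x := by
  rw [hasDerivAt_iff_tendsto_slope] at hf ⊢
  have hslope : slope (fun y => f y • k y) x = fun y => slope f x y • k y := by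
    funext y
    simp only [slope_def_module, hfx, zero_smul, sub_zero, smul_smul, smul_eq_mul]
  rw [hslope]
  exact hf.smul (hk.mono_left nhdsWithin_le_nhds)

theorem ellipsoid_radicand_pos {β : ℝ} (hβ : β ≠ 0) (θ : ℝ) :
    0 < β ^ 2 * sin θ ^ 2 + cos θ ^ 2 := by
  have hβ2 : 0 < β ^ 2 := by positivity
  have hsc := sin_sq_add_cos_sq θ
  rcases le_or_gt 1 (β ^ 2) with h | h
  · nlinarith [sq_nonneg (sin θ)]
  · nlinarith [sq_nonneg (cos θ)]

theorem hasDerivAt_sqrt_ellipsoid_radicand {β : ℝ} (hβ : β ≠ 0) (θ : ℝ) :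
    HasDerivAt (fun θ => √(β ^ 2 * sin θ ^ 2 + cos θ ^ 2))
      ((β ^ 2 - 1) * sin θ * cos θ / √(β ^ 2 * sin θ ^ 2 + cos θ ^ 2)) θ := by
  have hrad : HasDerivAt (fun θ => β ^ 2 * sin θ ^ 2 + cos θ ^ 2)
      (2 * (β ^ 2 - 1) * sin θ * cos θ) θ := by
    refine ((((hasDerivAt_sin θ).pow 2).const_mul (β ^ 2)).add
      ((hasDerivAt_cos θ).pow 2)).congr_deriv ?_
    ring
  have hpos := ellipsoid_radicand_pos hβ θ
  convert hrad.sqrt hpos.ne' using 1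
  field_simp

/-- For the balanced ellipsoid (α = 0), with `U(θ) = Z(θ) = √(β² sin²θ + cos²θ)`
and `G₀(θ) = κ² cos θ/sin³θ − U′(θ)`, one has the identity
`G₀′(π/2) = −κ² + (β²−1)/β`, and hence the linear-stability condition
`G₀′(π/2) < 0 ⟺ κ² > (β²−1)/β`. -/
theorem equator_rotation_stability (β κ : ℝ) (hβ : 0 < β)
    (U G₀ : ℝ → ℝ)
    (hU : ∀ θ : ℝ, U θ = Real.sqrt (β ^ 2 * Real.sin θ ^ 2 + Real.cos θ ^ 2))
    (hG₀ : ∀ θ : ℝ, G₀ θ = κ ^ 2 * Real.cos θ / Real.sin θ ^ 3 - deriv U θ) :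
    deriv G₀ (π / 2) = -κ ^ 2 + (β ^ 2 - 1) / β ∧
      (deriv G₀ (π / 2) < 0 ↔ (β ^ 2 - 1) / β < κ ^ 2) := by
  set k : ℝ → ℝ := fun θ =>
    κ ^ 2 / sin θ ^ 3 - (β ^ 2 - 1) * sin θ / √(β ^ 2 * sin θ ^ 2 + cos θ ^ 2)
  have hG₀_eq : G₀ = fun θ => cos θ * k θ := by
    funext θ
    rw [hG₀, funext hU, (hasDerivAt_sqrt_ellipsoid_radicand hβ.ne' θ).deriv]
    ring
  have hk : ContinuousAt k (π / 2) := by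
    have hZ : √(β ^ 2 * sin (π / 2) ^ 2 + cos (π / 2) ^ 2) ≠ 0 :=
      (sqrt_pos.2 (ellipsoid_radicand_pos hβ.ne' _)).ne'
    exact (continuousAt_const.div (continuous_sin.pow 3).continuousAt (by simp)).sub
      ((continuousAt_const.mul continuous_sin.continuousAt).div (by fun_prop) hZ)
  have hder : HasDerivAt G₀ (-κ ^ 2 + (β ^ 2 - 1) / β) (π / 2) := by
    rw [hG₀_eq]
    have h := (hasDerivAt_cos (π / 2)).smul_of_eq_zero cos_pi_div_two hk
    simp only [smul_eq_mul] at h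
    refine h.congr_deriv ?_
    simp [k, sqrt_sq hβ.le]
    ring
  rw [hder.deriv]
  exact ⟨rfl, by constructor <;> intro h <;> linarith⟩
end

section
/- Let ψ(t) = ω_ψ t + ψ_per(t), where ψ_per is continuous and T-periodic, and let v : ℝ → ℂ be continuous and T-periodic. Suppose ζ̇(t) = v(t)·e^{iψ(t)}, and suppose ω_ψ + n·(2π/T) ≠ 0 for every integer n (non-resonance). If v has an absolutely convergent Fourier series and the series Σ |v_n|/|ω_ψ + n·2π/T| converges, then ζ(t) is bounded on ℝ. -/
/-! The integrand `f s = v s * exp (i ψ s)` satisfies `f (s + T) = z * f s` with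
`z = exp (i ω_ψ T)`, so `‖z‖ = 1`, and non-resonance says exactly that `z ≠ 1`. The primitive
`F t = ∫₀ᵗ f` then obeys `F (t + T) = F T + z * F t`, so `F - F T / (1 - z)` is multiplied by `z`
over each period: its norm is a continuous `T`-periodic function, hence bounded. -/

open Real Complex

section QuasiPeriodic

variable {E : Type*} [NormedAddCommGroup E] [NormedSpace ℂ E]
  {f : ℝ → E} {T : ℝ} {z : ℂ}

theorem integral_zero_add_period_of_quasiPeriodic (hf : Continuous f)
    (hz : ∀ s, f (s + T) = z • f s) (t : ℝ) :
    ∫ s in (0 : ℝ)..t + T, f s = (∫ s in (0 : ℝ)..T, f s) + z • ∫ s in (0 : ℝ)..t, f s := by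
  rw [← intervalIntegral.integral_add_adjacent_intervals (b := T)
    (hf.intervalIntegrable _ _) (hf.intervalIntegrable _ _)]
  congr 1
  have hshift := intervalIntegral.integral_comp_add_right f T (a := 0) (b := t)
  rw [zero_add] at hshift
  simp only [← hshift, hz, intervalIntegral.integral_smul]

theorem exists_norm_integral_le_of_quasiPeriodic (hT : T ≠ 0) (hf : Continuous f)
    (hz : ∀ s, f (s + T) = z • f s) (hz_norm : ‖z‖ = 1) (hz_one : z ≠ 1) :
    ∃ M, ∀ t, ‖∫ s in (0 : ℝ)..t, f s‖ ≤ M := by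
  set F : ℝ → E := fun t => ∫ s in (0 : ℝ)..t, f s
  set c : E := (1 - z)⁻¹ • F T
  have hF : Continuous F :=
    intervalIntegral.continuous_primitive (fun _ _ => hf.intervalIntegrable _ _) 0
  have hperiodic : Function.Periodic (fun t => ‖F t - c‖) T := by
    intro t
    have h1z : 1 - z ≠ 0 := sub_ne_zero.mpr hz_one.symm
    have : F (t + T) - c = z • (F t - c) := by
      have hscalar : (1 - z)⁻¹ - z * (1 - z)⁻¹ = 1 := by field_simp
      simp only [F, c, integral_zero_add_period_of_quasiPeriodic hf hz]
      match_scalars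
      · linear_combination -hscalar
      · ring
    simp only [this, norm_smul, hz_norm, one_mul]
  obtain ⟨M, hM⟩ := isBounded_iff_forall_norm_le.mp
    (hperiodic.isBounded_of_continuous hT (hF.sub continuous_const).norm)
  refine ⟨M + ‖c‖, fun t => ?_⟩
  calc ‖F t‖ = ‖(F t - c) + c‖ := by rw [sub_add_cancel]
    _ ≤ ‖F t - c‖ + ‖c‖ := norm_add_le _ _
    _ ≤ M + ‖c‖ := by
      gcongr
      simpa using hM _ (Set.mem_range_self t)

end QuasiPeriodic

theorem exp_I_mul_ne_one_of_nonresonant {ω T : ℝ} (hT : T ≠ 0)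
    (hnonres : ∀ n : ℤ, ω + n * (2 * π / T) ≠ 0) :
    Complex.exp (Complex.I * (ω * T)) ≠ 1 := by
  rw [Ne, Complex.exp_eq_one_iff]
  rintro ⟨n, hn⟩
  have hωT : ω * T = n * (2 * π) := by
    apply_fun Complex.im at hn
    simpa using hn
  apply hnonres (-n)
  field_simp
  push_cast
  linarith

theorem mul_exp_phase_add_period {T ω : ℝ} {v : ℝ → ℂ} {φ : ℝ → ℝ}
    (hv : Function.Periodic v T) (hφ : Function.Periodic φ T) (s : ℝ) :
    v (s + T) * Complex.exp (Complex.I * (ω * ↑(s + T) + φ (s + T))) =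
      Complex.exp (Complex.I * (ω * T)) * (v s * Complex.exp (Complex.I * (ω * s + φ s))) := by
  rw [hv s, hφ s, mul_left_comm, ← Complex.exp_add]
  push_cast
  ring_nf

theorem trajectory_bounded_general (T ωψ : ℝ) (hT : 0 < T)
    (ψper : ℝ → ℝ) (v : ℝ → ℂ) (ζ : ℝ → ℂ)
    (hψcont : Continuous ψper) (hψper : ∀ t, ψper (t + T) = ψper t)
    (hvcont : Continuous v) (hvper : ∀ t, v (t + T) = v t)
    (hζ : ∀ t, HasDerivAt ζ (v t * Complex.exp (Complex.I * (ωψ * t + ψper t))) t)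
    (hnonres : ∀ n : ℤ, ωψ + n * (2 * π / T) ≠ 0) :
    ∃ M : ℝ, ∀ t : ℝ, ‖ζ t‖ ≤ M := by
  set f : ℝ → ℂ := fun s => v s * Complex.exp (Complex.I * (ωψ * s + ψper s))
  have hf : Continuous f := by fun_prop
  have hz_norm : ‖Complex.exp (Complex.I * (ωψ * T))‖ = 1 := by
    rw [Complex.norm_exp]; simp
  obtain ⟨M, hM⟩ := exists_norm_integral_le_of_quasiPeriodic hT.ne' hf
    (mul_exp_phase_add_period hvper hψper) hz_norm
    (exp_I_mul_ne_one_of_nonresonant hT.ne' hnonres)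
  refine ⟨‖ζ 0‖ + M, fun t => ?_⟩
  have hFTC : ζ t = ζ 0 + ∫ s in (0 : ℝ)..t, f s := by
    rw [intervalIntegral.integral_eq_sub_of_hasDerivAt (fun s _ => hζ s)
      (hf.intervalIntegrable 0 t), add_sub_cancel]
  rw [hFTC]
  exact (norm_add_le _ _).trans (by gcongr; exact hM t)

/-- Boundedness criterion for the center-of-mass trajectory: if
`ζ̇(t) = v(t)·e^{iψ(t)}` with `ψ(t) = ω_ψ t + ψ_per(t)`, ψ_per continuous and
T-periodic, v continuous and T-periodic with absolutely convergent Fourier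
series with coefficients `c n`, the non-resonance condition
`ω_ψ + n·(2π/T) ≠ 0` holds for every `n : ℤ`, and
`Σ_n ‖c n‖/|ω_ψ + n·2π/T|` converges, then ζ is bounded on ℝ. -/
theorem trajectory_bounded (T ωψ : ℝ) (hT : 0 < T)
    (ψper : ℝ → ℝ) (v : ℝ → ℂ) (ζ : ℝ → ℂ) (c : ℤ → ℂ)
    (hψcont : Continuous ψper) (hψper : ∀ t, ψper (t + T) = ψper t)
    (hvcont : Continuous v) (hvper : ∀ t, v (t + T) = v t)
    (hζ : ∀ t, HasDerivAt ζ (v t * Complex.exp (Complex.I * (ωψ * t + ψper t))) t)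
    (hnonres : ∀ n : ℤ, ωψ + n * (2 * π / T) ≠ 0)
    (hfourier : ∀ t : ℝ, HasSum
      (fun n : ℤ => c n * Complex.exp (Complex.I * (n * (2 * π / T) * t))) (v t))
    (habs : Summable fun n : ℤ => ‖c n‖)
    (hsum : Summable fun n : ℤ => ‖c n‖ / |ωψ + n * (2 * π / T)|) :
    ∃ M : ℝ, ∀ t : ℝ, ‖ζ t‖ ≤ M :=
  trajectory_bounded_general T ωψ hT ψper v ζ hψcont hψper hvcont hvper hζ hnonres
end
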